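/- arXiv:1811.08031 — 2 statements merged into one kernel-verified Lean document; each statement's English description precedes it below -/
import Mathlib

section
/- For a finitely generated group G, define corank(G) as the largest r such that there exists a surjective group homomorphism from G onto the free group F_r of rank r. Then for any finitely generated groups G and H, corank(G × H) = max(corank(G), corank(H)). -/
/-- The corank of a group `G`: the largest `r` such that there exists an epimorphism
from `G` onto the free group of rank `r`. -/
noncomputable def corank (G : Type*) [Group G] : ℕ :=
  sSup {r : ℕ | ∃ f : G →* FreeGroup (Fin r), Function.Surjective f}

/-!
Let `f : G × H → F_s` be onto. The images `A` of `G` and `B` of `H` commute elementwise and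
generate `F_s`. If `B` is trivial then `f` restricted to `G` is already onto, and symmetrically.
Otherwise pick `b ≠ 1` in `B`: `A` lies in the centralizer of `b`, which is abelian, so `A` is
abelian, likewise `B`, hence `F_s` is abelian, `s ≤ 1`, and the nontrivial subgroup `A ≤ F_s`,
being free and abelian, is `≅ F_1`.

Centralizers of nontrivial elements of a free group are abelian because, by Nielsen–Schreier,
they are free groups with nontrivial centre, and a free group with two basis elements `a ≠ b` has
trivial centre: a central `z` lies in a cyclic group `⟨u⟩ ∋ a` and in a cyclic group `⟨v⟩ ∋ b`,
and counting exponent sums of `a` forces `z = 1`. The corank of a finitely generated group is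
finite since `F_r` needs `r` generators, as its abelianization `ℤ^r` does.
-/

open Function

namespace FreeGroup

theorem rank_fin (r : ℕ) : Group.rank (FreeGroup (Fin r)) = r := by
  classical
  apply le_antisymm
  · calc Group.rank (FreeGroup (Fin r)) ≤ (Finset.univ.image (of : Fin r → _)).card :=
          Group.rank_le (by simp [closure_range_of])
      _ ≤ r := Finset.card_image_le.trans_eq (Finset.card_fin r)
  obtain ⟨S, hcard, hS⟩ := Group.rank_spec (FreeGroup (Fin r))
  let χ : FreeGroup (Fin r) →* Multiplicative (Fin r → ℤ) :=
    lift fun i ↦ .ofAdd (Pi.single i 1)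
  let T : Finset (Fin r → ℤ) := S.image fun g ↦ (χ g).toAdd
  let P := Submodule.span ℤ (T : Set (Fin r → ℤ))
  have hχ : ∀ g, (χ g).toAdd ∈ P := by
    have : Subgroup.closure (S : Set _) ≤ (AddSubgroup.toSubgroup P.toAddSubgroup).comap χ :=
      Subgroup.closure_le _ |>.2 fun g hg ↦ Submodule.subset_span (Finset.mem_image_of_mem _ hg)
    exact fun g ↦ this (hS ▸ Subgroup.mem_top g)
  have hT : P = ⊤ := by
    rw [eq_top_iff, ← (Pi.basisFun ℤ (Fin r)).span_eq, Submodule.span_le]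
    rintro _ ⟨i, rfl⟩
    simpa [χ] using hχ (of i)
  calc r = Module.finrank ℤ P := by rw [hT, finrank_top, Module.finrank_fin_fun]
    _ ≤ T.card := finrank_span_finset_le_card T
    _ ≤ Group.rank (FreeGroup (Fin r)) := hcard ▸ Finset.card_image_le

theorem isCyclic_of_subsingleton {α : Type*} [Subsingleton α] : IsCyclic (FreeGroup α) := by
  rcases isEmpty_or_nonempty α with _ | ⟨⟨a⟩⟩
  · infer_instance
  · have := uniqueOfSubsingleton a
    infer_instance

end FreeGroup

namespace FreeGroupBasis

variable {ι F : Type*} [Group F]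

@[simp]
theorem lift_apply_coe {H : Type*} [Group H] (b : FreeGroupBasis ι F) (f : ι → H) (i : ι) :
    b.lift f (b i) = f i := by
  simp only [lift_apply_apply, repr_apply_coe, FreeGroup.lift_apply_of]

theorem subsingleton_of_isMulCommutative [IsMulCommutative F] (b : FreeGroupBasis ι F) :
    Subsingleton ι := by
  classical
  refine ⟨fun i j ↦ by_contra fun hij ↦ ?_⟩
  let φ := b.lift fun k ↦ if k = i then Equiv.swap (0 : Fin 3) 1 else Equiv.swap 1 2
  have := congrArg φ (mul_comm' (b i) (b j))
  simp only [map_mul, lift_apply_coe, φ, if_pos, if_neg (Ne.symm hij)] at this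
  exact absurd this (by decide)

theorem isCyclic_of_subsingleton [Subsingleton ι] (b : FreeGroupBasis ι F) : IsCyclic F :=
  (b.repr.isCyclic).2 FreeGroup.isCyclic_of_subsingleton

end FreeGroupBasis

namespace IsFreeGroup

variable {F : Type*} [Group F] [IsFreeGroup F]

theorem subsingleton_generators [IsMulCommutative F] : Subsingleton (Generators F) :=
  (basis F).subsingleton_of_isMulCommutative

theorem isCyclic_of_isMulCommutative [IsMulCommutative F] : IsCyclic F :=
  have := subsingleton_generators (F := F)
  (basis F).isCyclic_of_subsingleton

theorem exists_mem_zpowers_of_commute {x y : F} (h : Commute x y) :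
    ∃ u, x ∈ Subgroup.zpowers u ∧ y ∈ Subgroup.zpowers u := by
  let K := Subgroup.closure {x, y}
  have : IsMulCommutative K := Subgroup.isMulCommutative_closure <| by
    simp only [Set.mem_insert_iff, Set.mem_singleton_iff]
    rintro a (rfl | rfl) b (rfl | rfl)
    exacts [rfl, h.eq, h.eq.symm, rfl]
  obtain ⟨u, hu⟩ := (isCyclic_of_isMulCommutative (F := K)).exists_generator
  have hK : ∀ z ∈ K, z ∈ Subgroup.zpowers (u : F) := fun z hz ↦ by
    obtain ⟨k, hk⟩ := hu ⟨z, hz⟩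
    exact ⟨k, congrArg Subtype.val hk⟩
  exact ⟨u, hK x (Subgroup.subset_closure (by simp)), hK y (Subgroup.subset_closure (by simp))⟩

end IsFreeGroup

namespace FreeGroupBasis

variable {ι F : Type*} [Group F]

open Classical in
noncomputable def expSum (b : FreeGroupBasis ι F) (i : ι) : F →* Multiplicative ℤ :=
  b.lift (Pi.mulSingle i (.ofAdd 1))

@[simp]
theorem expSum_apply_self (b : FreeGroupBasis ι F) (i : ι) : b.expSum i (b i) = .ofAdd 1 := by
  simp [expSum]

@[simp]
theorem expSum_apply_of_ne (b : FreeGroupBasis ι F) {i j : ι} (h : j ≠ i) :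
    b.expSum i (b j) = 1 := by
  simp [expSum, h]

theorem toAdd_expSum_zpow (b : FreeGroupBasis ι F) (i : ι) (u : F) (k : ℤ) :
    (b.expSum i (u ^ k)).toAdd = k * (b.expSum i u).toAdd := by
  rw [map_zpow, toAdd_zpow, smul_eq_mul]

theorem eq_one_of_commute_of_ne (b : FreeGroupBasis ι F) {i j : ι} (hij : i ≠ j) {z : F}
    (hi : Commute z (b i)) (hj : Commute z (b j)) : z = 1 := by
  have := b.isFreeGroup
  obtain ⟨u, hzu, hiu⟩ := IsFreeGroup.exists_mem_zpowers_of_commute hi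
  obtain ⟨v, hzv, hjv⟩ := IsFreeGroup.exists_mem_zpowers_of_commute hj
  obtain ⟨p, rfl⟩ := Subgroup.mem_zpowers_iff.1 hzu
  obtain ⟨q, hq⟩ := Subgroup.mem_zpowers_iff.1 hzv
  obtain ⟨k, hk⟩ := Subgroup.mem_zpowers_iff.1 hiu
  obtain ⟨l, hl⟩ := Subgroup.mem_zpowers_iff.1 hjv
  have hku : k * (b.expSum i u).toAdd = 1 := by
    rw [← toAdd_expSum_zpow]; simp [hk]
  have hlv : l * (b.expSum j v).toAdd = 1 := by
    rw [← toAdd_expSum_zpow]; simp [hl]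
  have hv : (b.expSum i v).toAdd = 0 := by
    refine (mul_eq_zero.1 ?_).resolve_left (left_ne_zero_of_mul_eq_one hlv)
    rw [← toAdd_expSum_zpow]; simp [hl, hij.symm]
  have hpu : p * (b.expSum i u).toAdd = 0 := by
    rw [← toAdd_expSum_zpow, ← hq, toAdd_expSum_zpow, hv, mul_zero]
  rw [(mul_eq_zero.1 hpu).resolve_right (right_ne_zero_of_mul_eq_one hku), zpow_zero]

end FreeGroupBasis

namespace IsFreeGroup

variable {F : Type*} [Group F] [IsFreeGroup F]

theorem isMulCommutative_of_mem_center {z : F} (hz : z ∈ Subgroup.center F) (hz1 : z ≠ 1) :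
    IsMulCommutative F := by
  rcases subsingleton_or_nontrivial (Generators F) with _ | ⟨i, j, hij⟩
  · have := (basis F).isCyclic_of_subsingleton
    infer_instance
  · have hcomm : ∀ g, Commute z g := fun g ↦ (Subgroup.mem_center_iff.1 hz g).symm
    exact absurd ((basis F).eq_one_of_commute_of_ne hij (hcomm _) (hcomm _)) hz1

theorem isMulCommutative_centralizer {x : F} (hx : x ≠ 1) :
    IsMulCommutative (Subgroup.centralizer {x}) := by
  let x' : Subgroup.centralizer {x} := ⟨x, Subgroup.mem_centralizer_singleton_iff.2 rfl⟩
  refine isMulCommutative_of_mem_center (z := x') ?_ (fun h ↦ hx (congrArg Subtype.val h))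
  exact Subgroup.mem_center_iff.2 fun g ↦
    Subtype.ext (Subgroup.mem_centralizer_singleton_iff.1 g.2)

theorem nonempty_mulEquiv_freeGroup_fin_one [IsMulCommutative F] [Nontrivial F] :
    Nonempty (F ≃* FreeGroup (Fin 1)) := by
  have := subsingleton_generators (F := F)
  obtain ⟨i⟩ : Nonempty (Generators F) := by
    by_contra h
    have := not_nonempty_iff.1 h
    exact not_subsingleton F (toFreeGroup F).toEquiv.subsingleton
  have := uniqueOfSubsingleton i
  exact ⟨(toFreeGroup F).trans (FreeGroup.freeGroupCongr (Equiv.ofUnique _ _))⟩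

end IsFreeGroup

namespace MonoidHom

variable {G H K : Type*} [Group G] [Group H] [Group K]

theorem surjective_comp_inl_of_range_comp_inr_eq_bot {f : G × H →* K} (hf : Surjective f)
    (h : (f.comp (inr G H)).range = ⊥) : Surjective (f.comp (inl G H)) := by
  intro y
  obtain ⟨⟨g, h'⟩, rfl⟩ := hf y
  have : f (1, h') = 1 := (Subgroup.eq_bot_iff_forall _).1 h _ ⟨h', rfl⟩
  refine ⟨g, ?_⟩
  calc f (g, 1) = f (g, 1) * f (1, h') := by rw [this, mul_one]
    _ = f (g, h') := by rw [← map_mul, Prod.mk_mul_mk, mul_one, one_mul]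

theorem surjective_comp_inr_of_range_comp_inl_eq_bot {f : G × H →* K} (hf : Surjective f)
    (h : (f.comp (inl G H)).range = ⊥) : Surjective (f.comp (inr G H)) :=
  surjective_comp_inl_of_range_comp_inr_eq_bot
    (f := f.comp (MulEquiv.prodComm : H × G ≃* G × H).toMonoidHom)
    (hf.comp (MulEquiv.surjective _)) h

end MonoidHom

theorem IsFreeGroup.isMulCommutative_of_surjective_prod {G H F : Type*} [Group G] [Group H]
    [Group F] [IsFreeGroup F] {f : G × H →* F} (hf : Surjective f)
    (hG : (f.comp (MonoidHom.inl G H)).range ≠ ⊥)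
    (hH : (f.comp (MonoidHom.inr G H)).range ≠ ⊥) : IsMulCommutative F := by
  obtain ⟨⟨_, g₀, rfl⟩, hg₀⟩ := Subgroup.ne_bot_iff_exists_ne_one.1 hG
  obtain ⟨⟨_, h₀, rfl⟩, hh₀⟩ := Subgroup.ne_bot_iff_exists_ne_one.1 hH
  have hGH : ∀ g h, Commute (f (g, 1)) (f (1, h)) := fun g h ↦
    (MonoidHom.commute_inl_inr g h).map f
  have hGG : ∀ g g', Commute (f (g, 1)) (f (g', 1)) := by
    have := isMulCommutative_centralizer (x := f (1, h₀)) fun h ↦ hh₀ (Subtype.ext h)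
    exact fun g g' ↦ setLike_mul_comm (Subgroup.mem_centralizer_singleton_iff.2 (hGH g h₀).eq)
      (Subgroup.mem_centralizer_singleton_iff.2 (hGH g' h₀).eq)
  have hHH : ∀ h h', Commute (f (1, h)) (f (1, h')) := by
    have := isMulCommutative_centralizer (x := f (g₀, 1)) fun h ↦ hg₀ (Subtype.ext h)
    exact fun h h' ↦ setLike_mul_comm
      (Subgroup.mem_centralizer_singleton_iff.2 (hGH g₀ h).eq.symm)
      (Subgroup.mem_centralizer_singleton_iff.2 (hGH g₀ h').eq.symm)
  have hsplit : ∀ g h, f (g, h) = f (g, 1) * f (1, h) := fun g h ↦ by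
    rw [← map_mul, Prod.mk_mul_mk, mul_one, one_mul]
  refine isMulCommutative_iff.2 fun x y ↦ ?_
  obtain ⟨⟨g, h⟩, rfl⟩ := hf x
  obtain ⟨⟨g', h'⟩, rfl⟩ := hf y
  rw [hsplit g h, hsplit g' h']
  exact (((hGG g g').mul_right (hGH g h')).mul_left ((hGH g' h).symm.mul_right (hHH h h'))).eq

section Corank

variable {G : Type*} [Group G] [Group.FG G]

theorem corank_bddAbove : BddAbove {r : ℕ | ∃ f : G →* FreeGroup (Fin r), Surjective f} :=
  ⟨Group.rank G, by
    rintro r ⟨f, hf⟩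
    exact FreeGroup.rank_fin r ▸ Group.rank_le_of_surjective f hf⟩

theorem le_corank_of_surjective {r : ℕ} (f : G →* FreeGroup (Fin r)) (hf : Surjective f) :
    r ≤ corank G :=
  le_csSup corank_bddAbove ⟨f, hf⟩

theorem exists_surjective_corank : ∃ f : G →* FreeGroup (Fin (corank G)), Surjective f :=
  Nat.sSup_mem (s := {r : ℕ | ∃ f : G →* FreeGroup (Fin r), Surjective f})
    ⟨0, 1, fun _ ↦ ⟨1, Subsingleton.elim _ _⟩⟩ corank_bddAbove

theorem corank_le_of_surjective {H : Type*} [Group H] (φ : G →* H) (hφ : Surjective φ) :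
    corank H ≤ corank G := by
  have := Group.fg_of_surjective hφ
  obtain ⟨f, hf⟩ := exists_surjective_corank (G := H)
  exact le_corank_of_surjective (f.comp φ) (hf.comp hφ)

end Corank

theorem le_corank_or_le_corank_of_surjective {G H : Type*} [Group G] [Group H] [Group.FG G]
    [Group.FG H] {s : ℕ} (f : G × H →* FreeGroup (Fin s)) (hf : Surjective f) :
    s ≤ corank G ∨ s ≤ corank H := by
  by_cases hH : (f.comp (MonoidHom.inr G H)).range = ⊥
  · exact .inl (le_corank_of_surjective _ (f.surjective_comp_inl_of_range_comp_inr_eq_bot hf hH))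
  by_cases hG : (f.comp (MonoidHom.inl G H)).range = ⊥
  · exact .inr (le_corank_of_surjective _ (f.surjective_comp_inr_of_range_comp_inl_eq_bot hf hG))
  have := IsFreeGroup.isMulCommutative_of_surjective_prod hf hG hH
  have hs : s ≤ 1 := by
    simpa using Fintype.card_le_one_iff_subsingleton.2
      (FreeGroupBasis.ofFreeGroup (Fin s)).subsingleton_of_isMulCommutative
  let A := (f.comp (MonoidHom.inl G H)).range
  have : Nontrivial A := (Subgroup.nontrivial_iff_ne_bot _).2 hG
  obtain ⟨e⟩ := IsFreeGroup.nonempty_mulEquiv_freeGroup_fin_one (F := A)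
  exact .inl <| hs.trans <| le_corank_of_surjective (e.toMonoidHom.comp (MonoidHom.rangeRestrict _))
    (e.surjective.comp (MonoidHom.rangeRestrict_surjective _))

/-- For finitely generated groups `G` and `H`,
`corank(G × H) = max(corank(G), corank(H))`. -/
theorem corank_prod (G H : Type*) [Group G] [Group H] [Group.FG G] [Group.FG H] :
    corank (G × H) = max (corank G) (corank H) := by
  obtain ⟨f, hf⟩ := exists_surjective_corank (G := G × H)
  refine le_antisymm ?_ (max_le ?_ ?_)
  · rcases le_corank_or_le_corank_of_surjective f hf with h | h
    exacts [h.trans (le_max_left _ _), h.trans (le_max_right _ _)]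
  · exact corank_le_of_surjective (MonoidHom.fst G H) Prod.fst_surjective
  · exact corank_le_of_surjective (MonoidHom.snd G H) Prod.snd_surjective
end

section
/- Let Σ be a closed orientable surface of genus g, with fundamental group π₁(Σ) presented as ⟨a₁,b₁,…,a_g,b_g | Π[aᵢ,bᵢ]⟩. Then there exists an epimorphism from π₁(Σ) onto the free group F_g, but no epimorphism from π₁(Σ) onto F_{g+1}; that is, the corank of π₁(Σ) equals g. -/
open scoped commutatorElement

/-- The surface relator `[a₁,b₁]⋯[a_g,b_g]` in the free group on generators
`aᵢ = (i, true)`, `bᵢ = (i, false)`. -/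
def surfaceRelator (g : ℕ) : FreeGroup (Fin g × Bool) :=
  ((List.finRange g).map fun i => ⁅FreeGroup.of (i, true), FreeGroup.of (i, false)⁆).prod

/-- The fundamental group of the closed orientable surface of genus `g`, presented as
`⟨a₁,b₁,…,a_g,b_g | [a₁,b₁]⋯[a_g,b_g]⟩`. -/
def SurfaceGroup (g : ℕ) : Type :=
  PresentedGroup ({surfaceRelator g} : Set (FreeGroup (Fin g × Bool)))

instance (g : ℕ) : Group (SurfaceGroup g) := by
  unfold SurfaceGroup; infer_instance

/-! ### The integer Heisenberg group -/

/-- The discrete Heisenberg group: `ℤ³` with multiplication twisted by the cocycle `x.a * y.b`.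
A homomorphism of a group `G` into `Heis` is the data of two homomorphisms `a b : G → ℤ`
together with a trivialization `c` of their cup product. -/
structure Heis : Type where
  a : ℤ
  b : ℤ
  c : ℤ

namespace Heis

instance : Mul Heis := ⟨fun x y => ⟨x.a + y.a, x.b + y.b, x.c + y.c + x.a * y.b⟩⟩
instance : One Heis := ⟨⟨0, 0, 0⟩⟩
instance : Inv Heis := ⟨fun x => ⟨-x.a, -x.b, x.a * x.b - x.c⟩⟩

@[simp] lemma mul_a (x y : Heis) : (x * y).a = x.a + y.a := rfl
@[simp] lemma mul_b (x y : Heis) : (x * y).b = x.b + y.b := rfl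
@[simp] lemma mul_c (x y : Heis) : (x * y).c = x.c + y.c + x.a * y.b := rfl
@[simp] lemma one_a : (1 : Heis).a = 0 := rfl
@[simp] lemma one_b : (1 : Heis).b = 0 := rfl
@[simp] lemma one_c : (1 : Heis).c = 0 := rfl
@[simp] lemma inv_a (x : Heis) : x⁻¹.a = -x.a := rfl
@[simp] lemma inv_b (x : Heis) : x⁻¹.b = -x.b := rfl
@[simp] lemma inv_c (x : Heis) : x⁻¹.c = x.a * x.b - x.c := rfl

@[ext] lemma ext {x y : Heis} (ha : x.a = y.a) (hb : x.b = y.b) (hc : x.c = y.c) : x = y := by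
  cases x; cases y; simp_all

instance : Group Heis where
  mul_assoc x y z := by ext <;> simp <;> ring
  one_mul x := by ext <;> simp
  mul_one x := by ext <;> simp
  inv_mul_cancel x := by ext <;> simp

@[simp] lemma commutator_a (x y : Heis) : ⁅x, y⁆.a = 0 := by
  simp [commutatorElement_def]
@[simp] lemma commutator_b (x y : Heis) : ⁅x, y⁆.b = 0 := by
  simp [commutatorElement_def]
@[simp] lemma commutator_c (x y : Heis) : ⁅x, y⁆.c = x.a * y.b - x.b * y.a := by
  simp [commutatorElement_def]; ring

lemma prod_central (l : List Heis) (h : ∀ x ∈ l, x.a = 0 ∧ x.b = 0) :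
    l.prod.a = 0 ∧ l.prod.b = 0 ∧ l.prod.c = (l.map c).sum := by
  induction l with
  | nil => simp
  | cons x t ih =>
    obtain ⟨hx, ht⟩ := List.forall_mem_cons.mp h
    obtain ⟨h1, h2, h3⟩ := ih ht
    simp [hx.1, hx.2, h1, h2, h3]

/-- The first coordinate, as a homomorphism to `ℤ`. -/
def fstHom : Heis →* Multiplicative ℤ where
  toFun x := Multiplicative.ofAdd x.a
  map_one' := rfl
  map_mul' _ _ := rfl

/-- The second coordinate, as a homomorphism to `ℤ`. -/
def sndHom : Heis →* Multiplicative ℤ where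
  toFun x := Multiplicative.ofAdd x.b
  map_one' := rfl
  map_mul' _ _ := rfl

@[simp] lemma fstHom_apply (x : Heis) : fstHom x = Multiplicative.ofAdd x.a := rfl
@[simp] lemma sndHom_apply (x : Heis) : sndHom x = Multiplicative.ofAdd x.b := rfl

end Heis

/-- Evaluating a homomorphism into `Heis` on the surface relator: the `c`-component computes
the symplectic pairing of the `a`- and `b`-components. -/
lemma heis_relator {g : ℕ} (h : FreeGroup (Fin g × Bool) →* Heis) :
    (h (surfaceRelator g)).c = ∑ i : Fin g,
      ((h (.of (i, true))).a * (h (.of (i, false))).b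
        - (h (.of (i, true))).b * (h (.of (i, false))).a) := by
  have hm : h (surfaceRelator g)
      = ((List.finRange g).map fun i =>
          ⁅h (.of (i, true)), h (.of (i, false))⁆).prod := by
    rw [surfaceRelator, map_list_prod, List.map_map]
    congr 1
    ext i
    simp [Function.comp, map_commutatorElement]
  rw [hm]
  obtain ⟨-, -, hc⟩ := Heis.prod_central
      ((List.finRange g).map fun i => ⁅h (.of (i, true)), h (.of (i, false))⁆) (by
    intro x hx
    obtain ⟨i, -, rfl⟩ := List.mem_map.mp hx
    exact ⟨Heis.commutator_a _ _, Heis.commutator_b _ _⟩)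
  rw [hc, List.map_map, Fin.sum_univ_def]
  congr 1
  ext i
  simp [Function.comp]

/-! ### Exponent sums in free groups -/

/-- Coordinate homomorphism: the exponent sum of the generator `s`. -/
def coordHom {S : Type*} [DecidableEq S] (s : S) : FreeGroup S →* Multiplicative ℤ :=
  FreeGroup.lift fun t => Multiplicative.ofAdd (if t = s then (1 : ℤ) else 0)

lemma lift_eq_sum {S : Type*} [Fintype S] [DecidableEq S] (c : S → ℤ) (w : FreeGroup S) :
    (FreeGroup.lift (fun s => Multiplicative.ofAdd (c s)) w).toAdd
      = ∑ s : S, c s * (coordHom s w).toAdd := by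
  induction w using FreeGroup.induction_on with
  | C1 => simp
  | of x =>
      simp [coordHom, Finset.sum_ite_eq', mul_comm]
  | inv_of x ih =>
      simp only [map_inv, toAdd_inv, ih, neg_eq_iff_eq_neg, ← Finset.sum_neg_distrib]
      exact Finset.sum_congr rfl fun s _ => by ring
  | mul x y ihx ihy =>
      simp only [map_mul, toAdd_mul, ihx, ihy, mul_add, Finset.sum_add_distrib]

/-! ### Linear algebra: isotropic subspaces are at most half-dimensional -/

open Matrix

/-- The standard symplectic matrix on `Fin g × Bool`. -/
def Jmat (g : ℕ) : Matrix (Fin g × Bool) (Fin g × Bool) ℚ :=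
  fun p q => if p.1 = q.1 ∧ p.2 ≠ q.2 then (if p.2 then 1 else -1) else 0

lemma Jmat_mul_Jmat (g : ℕ) : Jmat g * Jmat g = -1 := by
  ext ⟨i, bi⟩ ⟨j, bj⟩
  simp only [Matrix.mul_apply, Jmat, Fintype.sum_prod_type, Fintype.sum_bool, Matrix.neg_apply,
    Matrix.one_apply]
  cases bi <;> cases bj <;>
    simp [Finset.sum_ite_eq', Prod.ext_iff, eq_comm] <;>
    by_cases h : i = j <;> simp [h]

/-- There is no `(g+1) × 2g` rational matrix with a right inverse whose rows are pairwise
orthogonal for the standard symplectic form. -/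
lemma matrix_contradiction {g : ℕ}
    (U : Matrix (Fin (g + 1)) (Fin g × Bool) ℚ)
    (V : Matrix (Fin g × Bool) (Fin (g + 1)) ℚ)
    (hUV : U * V = 1)
    (hsymp : ∀ j k, ∑ i : Fin g,
      (U j (i, true) * U k (i, false) - U j (i, false) * U k (i, true)) = 0) :
    False := by
  have hA : U * Jmat g * Uᵀ = 0 := by
    ext j k
    simp only [Matrix.mul_apply, Matrix.transpose_apply, Matrix.zero_apply, Jmat,
      Fintype.sum_prod_type, Fintype.sum_bool]
    refine Eq.trans ?_ (hsymp j k)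
    simp only [ne_eq, reduceCtorEq, not_false_eq_true, and_true, and_false, if_true, if_false,
      ite_false, not_true_eq_false, false_and, and_self, Bool.false_eq_true]
    simp only [mul_zero, zero_add, add_zero, mul_ite, mul_one, mul_neg_one,
      Finset.sum_ite_eq', Finset.mem_univ, if_true]
    refine Finset.sum_congr rfl fun i _ => ?_
    ring
  have r1 : (g + 1 : ℕ) ≤ U.rank := by
    have := Matrix.rank_mul_le_left U V
    rw [hUV, Matrix.rank_one, Fintype.card_fin] at this
    exact this
  have hU : U * Jmat g * -Jmat g = U := by
    rw [Matrix.mul_assoc, Matrix.mul_neg, Jmat_mul_Jmat]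
    simp
  have r2 : U.rank ≤ (U * Jmat g).rank := by
    conv_lhs => rw [← hU]
    exact Matrix.rank_mul_le_left _ _
  have r3 : Uᵀ.rank = U.rank := Matrix.rank_transpose U
  have r4 : LinearMap.range Uᵀ.mulVecLin ≤ LinearMap.ker (U * Jmat g).mulVecLin := by
    rintro x ⟨y, rfl⟩
    have h0 : ((U * Jmat g) * Uᵀ).mulVecLin y = 0 := by rw [hA]; simp
    rw [Matrix.mulVecLin_mul] at h0
    exact h0
  have r5 : Uᵀ.rank ≤ Module.finrank ℚ (LinearMap.ker (U * Jmat g).mulVecLin) :=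
    Submodule.finrank_mono r4
  have r6 := LinearMap.finrank_range_add_finrank_ker (U * Jmat g).mulVecLin
  rw [Module.finrank_pi ℚ] at r6
  simp only [Fintype.card_prod, Fintype.card_fin, Fintype.card_bool] at r6
  have r7 : (U * Jmat g).rank
      + Module.finrank ℚ (LinearMap.ker (U * Jmat g).mulVecLin) = g * 2 := r6
  omega

/-! ### No epimorphism onto `F_{g+1}` -/

/-- The core of the argument: no surjection `F_{2g} → F_{g+1}` kills the surface relator. -/
lemma no_epi (g : ℕ) (π : FreeGroup (Fin g × Bool) →* FreeGroup (Fin (g + 1)))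
    (hr : π (surfaceRelator g) = 1) (hs : Function.Surjective π) : False := by
  classical
  -- the pulled-back cohomology classes
  set u : Fin (g + 1) → (Fin g × Bool) → ℤ :=
    fun j s => (coordHom j (π (FreeGroup.of s))).toAdd with hu
  -- the symplectic pairing of any two of them vanishes
  have hsymp : ∀ j k : Fin (g + 1), ∑ i : Fin g,
      (u j (i, true) * u k (i, false) - u j (i, false) * u k (i, true)) = 0 := by
    intro j k
    set H : FreeGroup (Fin (g + 1)) →* Heis :=
      FreeGroup.lift fun m => (⟨if m = j then 1 else 0, if m = k then 1 else 0, 0⟩ : Heis)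
    have ha : Heis.fstHom.comp H = coordHom j := by
      apply FreeGroup.ext_hom
      intro m
      simp [H, coordHom]
    have hb : Heis.sndHom.comp H = coordHom k := by
      apply FreeGroup.ext_hom
      intro m
      simp [H, coordHom]
    have ha' : ∀ w, (H w).a = (coordHom j w).toAdd := by
      intro w
      have := congrArg (fun f => (f : FreeGroup (Fin (g+1)) →* Multiplicative ℤ) w) ha
      simpa using congrArg Multiplicative.toAdd this
    have hb' : ∀ w, (H w).b = (coordHom k w).toAdd := by
      intro w
      have := congrArg (fun f => (f : FreeGroup (Fin (g+1)) →* Multiplicative ℤ) w) hb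
      simpa using congrArg Multiplicative.toAdd this
    have hrel := heis_relator (H.comp π)
    have h1 : (H.comp π) (surfaceRelator g) = 1 := by
      simp [MonoidHom.comp_apply, hr]
    rw [h1] at hrel
    simp only [MonoidHom.comp_apply] at hrel
    rw [Heis.one_c] at hrel
    refine Eq.trans ?_ hrel.symm
    refine Finset.sum_congr rfl fun i _ => ?_
    rw [ha', ha', hb', hb']
    simp only [hu]
    ring
  -- preimages of the generators
  choose w hw using hs
  -- the two rational matrices
  set U : Matrix (Fin (g + 1)) (Fin g × Bool) ℚ := fun j s => (u j s : ℚ) with hU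
  set V : Matrix (Fin g × Bool) (Fin (g + 1)) ℚ :=
    fun s k => ((coordHom s (w (FreeGroup.of k))).toAdd : ℚ) with hV
  have hUV : U * V = 1 := by
    ext j k
    have hθ : (coordHom j).comp π
        = FreeGroup.lift fun s => Multiplicative.ofAdd (u j s) := by
      apply FreeGroup.ext_hom
      intro s
      simp [hu, coordHom]
    have key : (if k = j then (1 : ℤ) else 0)
        = ∑ s : Fin g × Bool, u j s * (coordHom s (w (FreeGroup.of k))).toAdd := by
      rw [← lift_eq_sum, ← hθ]
      simp [MonoidHom.comp_apply, hw, coordHom]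
    simp only [Matrix.mul_apply, hU, hV, Matrix.one_apply]
    rw [show ((if j = k then (1:ℚ) else 0)) = ((if k = j then (1:ℤ) else 0) : ℤ) by
      by_cases h : j = k <;> simp [h, eq_comm]]
    rw [key]
    push_cast
    rfl
  exact matrix_contradiction U V hUV (by
    intro j k
    have := hsymp j k
    have : ((∑ i : Fin g,
        (u j (i, true) * u k (i, false) - u j (i, false) * u k (i, true)) : ℤ) : ℚ) = 0 := by
      rw [this]; rfl
    push_cast at this
    exact this)

/-- The fundamental group of a closed orientable surface of genus `g` admits an epimorphism
onto the free group `F_g`, but admits no epimorphism onto `F_{g+1}`; that is, its corank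
is `g = ⌊k/2⌋` where `χ = 2 - k`. -/
theorem surfaceGroup_corank (g : ℕ) :
    (∃ φ : SurfaceGroup g →* FreeGroup (Fin g), Function.Surjective φ) ∧
      ¬∃ φ : SurfaceGroup g →* FreeGroup (Fin (g + 1)), Function.Surjective φ := by
  constructor
  · -- existence: send `aᵢ ↦ xᵢ`, `bᵢ ↦ 1`
    have hrel : ∀ r ∈ ({surfaceRelator g} : Set (FreeGroup (Fin g × Bool))),
        FreeGroup.lift (fun p : Fin g × Bool => if p.2 then FreeGroup.of p.1 else 1) r = 1 := by
      rintro r rfl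
      rw [surfaceRelator, map_list_prod, List.map_map]
      apply List.prod_eq_one
      intro x hx
      obtain ⟨i, -, rfl⟩ := List.mem_map.mp hx
      simp [Function.comp, map_commutatorElement]
    refine ⟨PresentedGroup.toGroup hrel, ?_⟩
    have hgen : ∀ i : Fin g, FreeGroup.of i ∈ (PresentedGroup.toGroup hrel).range := by
      intro i
      exact ⟨PresentedGroup.of (i, true), by simp [PresentedGroup.toGroup.of]⟩
    have htop : (PresentedGroup.toGroup hrel).range = ⊤ := by
      rw [← top_le_iff, ← FreeGroup.closure_range_of (Fin g), Subgroup.closure_le]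
      rintro _ ⟨i, rfl⟩
      exact hgen i
    exact MonoidHom.range_eq_top.mp htop
  · rintro ⟨φ, hφ⟩
    let πmk : FreeGroup (Fin g × Bool) →* SurfaceGroup g :=
      PresentedGroup.mk ({surfaceRelator g} : Set (FreeGroup (Fin g × Bool)))
    refine no_epi g (φ.comp πmk) ?_ ?_
    · have h1 : πmk (surfaceRelator g) = 1 :=
        (QuotientGroup.eq_one_iff _).mpr
          (Subgroup.subset_normalClosure (Set.mem_singleton _))
      rw [MonoidHom.comp_apply, h1, _root_.map_one]
    · exact hφ.comp (PresentedGroup.mk_surjective _)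
end
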